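/- Population double-robustness identity. Under Assumptions 1 and 2, let ε ∈ (0,1/2), let e₀ : 𝒳 → [ε,1−ε], r₀ : {0,1}×𝒳×𝒮 → [ε,1], μ₀ : {0,1}×𝒳 → ℝ and μ̃₀ : {0,1}×𝒳×𝒮 → ℝ be measurable, and assume Y(1), μ̃₀(1,X,S(1)), μ₀(1,X), μ̃*(1,X,S(1)), μ*(1,X) ∈ L¹(P). Then E[ μ₀(1,X) + (TR/(e₀(X)r₀(1,X,S)))·(Y − μ̃₀(1,X,S)) + (T/e₀(X))·(μ̃₀(1,X,S) − μ₀(1,X)) ] − E[Y(1)] = E[ (e*(X)·(r*(1,X,S(1)) − r₀(1,X,S(1)))/(e₀(X)·r₀(1,X,S(1))))·(μ̃*(1,X,S(1)) − μ̃₀(1,X,S(1))) ] + E[ ((e*(X) − e₀(X))/e₀(X))·(μ*(1,X) − μ₀(1,X)) ]. In particular, if almost surely (μ̃₀(1,X,S(1)) − μ̃*(1,X,S(1)))·(r₀(1,X,S(1)) − r*(1,X,S(1))) = 0 and (μ₀(1,X) − μ*(1,X))·(e₀(X) − e*(X)) = 0, then the left-hand side equals 0, i.e., the uncentered influence function with possibly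 misspecified nuisances has mean E[Y(1)]. -/

import Mathlib

open MeasureTheory ProbabilityTheory Filter
open scoped ENNReal NNReal Topology

noncomputable section

namespace Surrogate

variable {Ω 𝒳 𝒮 : Type*} [MeasurableSpace Ω] [MeasurableSpace 𝒳] [MeasurableSpace 𝒮]

/-- Potential value indexed by `t ∈ {0,1}` (encoded as a real number). -/
def pot {α : Type*} (a0 a1 : Ω → α) (t : ℝ) : Ω → α := if t = 1 then a1 else a0

/-- Observed value `a(T)`. -/
def obs {α : Type*} (T : Ω → ℝ) (a0 a1 : Ω → α) : Ω → α := fun ω => if T ω = 1 then a1 ω else a0 ω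

/-- σ-algebra generated by one random variable. -/
def mX (X : Ω → 𝒳) : MeasurableSpace Ω := MeasurableSpace.comap X inferInstance

/-- σ-algebra generated by a pair of random variables. -/
def m2 {α β : Type*} [MeasurableSpace α] [MeasurableSpace β] (U : Ω → α) (V : Ω → β) :
    MeasurableSpace Ω := MeasurableSpace.comap (fun ω => (U ω, V ω)) inferInstance

/-- σ-algebra generated by a triple of random variables. -/
def m3 {α β γ : Type*} [MeasurableSpace α] [MeasurableSpace β] [MeasurableSpace γ]
    (U : Ω → α) (V : Ω → β) (W : Ω → γ) : MeasurableSpace Ω :=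
  MeasurableSpace.comap (fun ω => (U ω, V ω, W ω)) inferInstance

/-- σ-algebra generated by four random variables. -/
def m4 {α β γ δ : Type*} [MeasurableSpace α] [MeasurableSpace β] [MeasurableSpace γ]
    [MeasurableSpace δ] (U : Ω → α) (V : Ω → β) (W : Ω → γ) (Z : Ω → δ) : MeasurableSpace Ω :=
  MeasurableSpace.comap (fun ω => (U ω, V ω, W ω, Z ω)) inferInstance

/-- A real-valued function is bounded. -/
def Bdd {α : Type*} (f : α → ℝ) : Prop := ∃ C, ∀ a, |f a| ≤ C

/-- Conditional independence of two random variables given a sub-σ-algebra, phrased through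
bounded measurable test functions. -/
def CondIndepBdd (P : Measure Ω) (m : MeasurableSpace Ω) {α β : Type*}
    [MeasurableSpace α] [MeasurableSpace β] (U : Ω → α) (V : Ω → β) : Prop :=
  ∀ f : α → ℝ, Measurable f → Bdd f → ∀ g : β → ℝ, Measurable g → Bdd g →
    P[fun ω => f (U ω) * g (V ω)|m]
      =ᵐ[P] fun ω => (P[fun ω' => f (U ω')|m]) ω * (P[fun ω' => g (V ω')|m]) ω

/-- Variance `E[Z²] − (E[Z])²`. -/
def Var (P : Measure Ω) (Z : Ω → ℝ) : ℝ := (∫ ω, (Z ω) ^ 2 ∂P) - (∫ ω, Z ω ∂P) ^ 2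

/-- Conditional variance `E[Z²|m] − (E[Z|m])²`. -/
def condVar (P : Measure Ω) (m : MeasurableSpace Ω) (Z : Ω → ℝ) : Ω → ℝ :=
  fun ω => (P[fun ω' => (Z ω') ^ 2|m]) ω - ((P[Z|m]) ω) ^ 2

/-- The efficient influence function ψ* of Theorem 1 (labeling propensity depending on
`(t,x,s)`), centered at `d`. -/
def psiStar (X : Ω → 𝒳) (T R : Ω → ℝ) (S : Ω → 𝒮) (Y : Ω → ℝ) (e : 𝒳 → ℝ)
    (r : ℝ → 𝒳 → 𝒮 → ℝ) (mt : ℝ → 𝒳 → 𝒮 → ℝ) (mu : ℝ → 𝒳 → ℝ) (d : ℝ) : Ω → ℝ :=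
  fun ω =>
    mu 1 (X ω) - mu 0 (X ω)
      + T ω * R ω / (e (X ω) * r 1 (X ω) (S ω)) * (Y ω - mt 1 (X ω) (S ω))
      - (1 - T ω) * R ω / ((1 - e (X ω)) * r 0 (X ω) (S ω)) * (Y ω - mt 0 (X ω) (S ω))
      + T ω / e (X ω) * (mt 1 (X ω) (S ω) - mu 1 (X ω))
      - (1 - T ω) / (1 - e (X ω)) * (mt 0 (X ω) (S ω) - mu 0 (X ω))
      - d

/-- The influence function ψ_I of Settings I and II (no surrogates), centered at `d`. -/
def psiI (X : Ω → 𝒳) (T R Y : Ω → ℝ) (e : 𝒳 → ℝ) (r2 : ℝ → 𝒳 → ℝ) (mu : ℝ → 𝒳 → ℝ)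
    (d : ℝ) : Ω → ℝ :=
  fun ω =>
    mu 1 (X ω) - mu 0 (X ω)
      + T ω * R ω / (e (X ω) * r2 1 (X ω)) * (Y ω - mu 1 (X ω))
      - (1 - T ω) * R ω / ((1 - e (X ω)) * r2 0 (X ω)) * (Y ω - mu 0 (X ω))
      - d

/-- The influence function ψ_III of Setting III (labeling propensity depending on `(t,x)`),
centered at `d`. -/
def psiIII (X : Ω → 𝒳) (T R : Ω → ℝ) (S : Ω → 𝒮) (Y : Ω → ℝ) (e : 𝒳 → ℝ)
    (r2 : ℝ → 𝒳 → ℝ) (mt : ℝ → 𝒳 → 𝒮 → ℝ) (mu : ℝ → 𝒳 → ℝ) (d : ℝ) : Ω → ℝ :=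
  fun ω =>
    mu 1 (X ω) - mu 0 (X ω)
      + T ω * R ω / (e (X ω) * r2 1 (X ω)) * (Y ω - mt 1 (X ω) (S ω))
      - (1 - T ω) * R ω / ((1 - e (X ω)) * r2 0 (X ω)) * (Y ω - mt 0 (X ω) (S ω))
      + T ω / e (X ω) * (mt 1 (X ω) (S ω) - mu 1 (X ω))
      - (1 - T ω) / (1 - e (X ω)) * (mt 0 (X ω) (S ω) - mu 0 (X ω))
      - d

/-- The influence function ψ_IV of Setting IV (fully observed outcomes), centered at `d`. -/
def psiIV (X : Ω → 𝒳) (T Y : Ω → ℝ) (e : 𝒳 → ℝ) (mu : ℝ → 𝒳 → ℝ) (d : ℝ) : Ω → ℝ :=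
  fun ω =>
    mu 1 (X ω) - mu 0 (X ω)
      + T ω / e (X ω) * (Y ω - mu 1 (X ω))
      - (1 - T ω) / (1 - e (X ω)) * (Y ω - mu 0 (X ω))
      - d

/-- The influence formula ψ evaluated on a data tuple `w = (x, t, s, r, y)` with nuisances
`(e, r, μ̃, μ)`, centered at `d`. -/
def psiData {𝒳' 𝒮' : Type*} (w : 𝒳' × ℝ × 𝒮' × ℝ × ℝ) (e : 𝒳' → ℝ) (r : ℝ → 𝒳' → 𝒮' → ℝ)
    (mt : ℝ → 𝒳' → 𝒮' → ℝ) (mu : ℝ → 𝒳' → ℝ) (d : ℝ) : ℝ :=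
  mu 1 w.1 - mu 0 w.1
    + w.2.1 * w.2.2.2.1 / (e w.1 * r 1 w.1 w.2.2.1) * (w.2.2.2.2 - mt 1 w.1 w.2.2.1)
    - (1 - w.2.1) * w.2.2.2.1 / ((1 - e w.1) * r 0 w.1 w.2.2.1) * (w.2.2.2.2 - mt 0 w.1 w.2.2.1)
    + w.2.1 / e w.1 * (mt 1 w.1 w.2.2.1 - mu 1 w.1)
    - (1 - w.2.1) / (1 - e w.1) * (mt 0 w.1 w.2.2.1 - mu 0 w.1)
    - d

end Surrogate

open Surrogate

/-!
Write `ψ` for the uncentered AIPW integrand with nuisances `(e₀, r₀, μ̃₀, μ₀)`. Pointwise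
(`e₀, r₀ ≠ 0`), `ψ - Y(1)` equals the two product-bias terms plus five residuals:
`T R (Y(1) - μ̃*) / (e₀ r₀)`, `T (μ̃* - μ̃₀) (R - r*) / (e₀ r₀)`, `(T - e*) h(X, S(1))`, and the
regression residuals `Y(1) - μ*`, `Y(1) - μ̃*` weighted by functions of `X`. Each has mean zero.
For the last two this is the definition of `μ*` and `μ̃*`; for the second, `r* = E[R | T, X, S]`;
for the third, unconfoundedness gives `E[T | X, Y(1), S(1)] = e*(X)`. For the first, Assumption
1(ii) says that on `{T = 1}` the label `R` and `Y(1)` are conditionally uncorrelated given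
`(X, T, S(1))` (for bounded test functions, extended to `Y(1)` by truncation), and for a binary
treatment `E[T | X, Y(1), S(1)] = e*(X)` forces `E[Y(1) | X, T, S(1)] = μ̃*(X, S(1))`.
-/

section Integration

variable {Ω : Type*} {mΩ : MeasurableSpace Ω} {P : Measure Ω}

theorem memLp_top_of_mem_Icc {f : Ω → ℝ} (hf : Measurable f) {a b : ℝ}
    (hab : ∀ ω, f ω ∈ Set.Icc a b) : MemLp f ∞ P :=
  memLp_top_of_bound hf.aestronglyMeasurable (max |a| |b|)
    (ae_of_all _ fun ω => abs_le_max_abs_abs (hab ω).1 (hab ω).2)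

theorem integral_mul_eq_of_forall_bdd {f h Y : Ω → ℝ} {C : ℝ}
    (hf : AEStronglyMeasurable f P) (hh : AEStronglyMeasurable h P)
    (hfC : ∀ᵐ ω ∂P, |f ω| ≤ C) (hhC : ∀ᵐ ω ∂P, |h ω| ≤ C) (hY : Integrable Y P)
    (heq : ∀ g : ℝ → ℝ, Measurable g → Bdd g →
      ∫ ω, f ω * g (Y ω) ∂P = ∫ ω, h ω * g (Y ω) ∂P) :
    ∫ ω, f ω * Y ω ∂P = ∫ ω, h ω * Y ω ∂P := by
  have htrunc : ∀ n : ℕ, Measurable (truncation (id : ℝ → ℝ) n) := fun n =>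
    (measurable_id.indicator measurableSet_Ioc).comp measurable_id
  have hlim : ∀ k : Ω → ℝ, AEStronglyMeasurable k P → (∀ᵐ ω ∂P, |k ω| ≤ C) →
      Tendsto (fun n : ℕ => ∫ ω, k ω * truncation id (n : ℝ) (Y ω) ∂P) atTop
        (𝓝 (∫ ω, k ω * Y ω ∂P)) := by
    intro k hk hkC
    refine tendsto_integral_of_dominated_convergence (fun ω => C * |Y ω|)
      (fun n => hk.mul ((htrunc n).comp_aemeasurable hY.aemeasurable).aestronglyMeasurable)
      (hY.abs.const_mul C) (fun n => hkC.mono fun ω hω => ?_) (ae_of_all _ fun ω => ?_)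
    · rw [Real.norm_eq_abs, abs_mul]
      exact mul_le_mul hω (abs_truncation_le_abs_self _ _ _) (abs_nonneg _)
        ((abs_nonneg _).trans hω)
    · obtain ⟨N, hN⟩ := exists_nat_gt |Y ω|
      refine tendsto_atTop_of_eventually_const (i₀ := N) fun n hn => ?_
      rw [truncation_eq_self (f := id) (hN.trans_le (Nat.cast_le.mpr hn))]
      rfl
  exact tendsto_nhds_unique ((hlim f hf hfC).congr fun n =>
    heq _ (htrunc n) ⟨|(n : ℝ)|, abs_truncation_le_bound id n⟩) (hlim h hh hhC)

end Integration

section ConditionalExpectation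

variable {Ω 𝒳 𝒮 β γ : Type*} {m mΩ : MeasurableSpace Ω} [MeasurableSpace 𝒳] [MeasurableSpace 𝒮]
  [MeasurableSpace β] [MeasurableSpace γ] {P : Measure Ω} [IsFiniteMeasure P]

theorem integral_mul_condExp (hm : m ≤ mΩ) {K f : Ω → ℝ} (hK : StronglyMeasurable[m] K)
    (hf : Integrable f P) (hKf : Integrable (fun ω => K ω * f ω) P) :
    ∫ ω, K ω * (P[f|m]) ω ∂P = ∫ ω, K ω * f ω ∂P :=
  calc ∫ ω, K ω * (P[f|m]) ω ∂P = ∫ ω, (P[fun ω => K ω * f ω|m]) ω ∂P :=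
        integral_congr_ae (condExp_mul_of_stronglyMeasurable_left hK hKf hf).symm
    _ = ∫ ω, K ω * f ω ∂P := integral_condExp hm

theorem integral_comp_mul_sub_eq_zero_of_ae_eq_condExp {V : Ω → β} (hV : Measurable V)
    {G : β → ℝ} (hG : Measurable G) {f g : Ω → ℝ} (hf : Integrable f P)
    (hGf : Integrable (fun ω => G (V ω) * f ω) P)
    (hg : g =ᵐ[P] P[f|MeasurableSpace.comap V inferInstance]) :
    ∫ ω, G (V ω) * (f ω - g ω) ∂P = 0 := by
  have hK : StronglyMeasurable[MeasurableSpace.comap V inferInstance] fun ω => G (V ω) :=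
    (hG.comp (comap_measurable V)).stronglyMeasurable
  have hGg : (fun ω => G (V ω) * g ω) =ᵐ[P]
      fun ω => G (V ω) * (P[f|MeasurableSpace.comap V inferInstance]) ω :=
    hg.mono fun ω h => congrArg (G (V ω) * ·) h
  have hGg_int : Integrable (fun ω => G (V ω) * g ω) P :=
    (integrable_condExp.congr (condExp_mul_of_stronglyMeasurable_left hK hGf hf)).congr hGg.symm
  simp_rw [mul_sub]
  rw [integral_sub hGf hGg_int, integral_congr_ae hGg,
    integral_mul_condExp hV.comap_le hK hf hGf, sub_self]

theorem integral_mul_mul_eq_of_factorizes (hm : m ≤ mΩ) {K R Y : Ω → ℝ}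
    (hK : StronglyMeasurable[m] K) {C : ℝ} (hKC : ∀ ω, |K ω| ≤ C) (hRm : AEStronglyMeasurable R P)
    (hR : ∀ ω, |R ω| ≤ 1) (hY : Integrable Y P)
    (hfac : ∀ g : ℝ → ℝ, Measurable g → Bdd g → ∀ᵐ ω ∂P, K ω ≠ 0 →
      (P[fun ω' => R ω' * g (Y ω')|m]) ω = (P[R|m]) ω * (P[fun ω' => g (Y ω')|m]) ω) :
    ∫ ω, K ω * R ω * Y ω ∂P = ∫ ω, K ω * (P[R|m]) ω * Y ω ∂P := by
  have hKm : AEStronglyMeasurable K P := (hK.mono hm).aestronglyMeasurable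
  have hKρ : ∀ᵐ ω ∂P, |K ω * (P[R|m]) ω| ≤ C :=
    (ae_bdd_abs_condExp_of_ae_bdd_abs (R := (1 : ℝ)) (ae_of_all _ hR)).mono fun ω h => by
      rw [abs_mul]; exact (mul_le_of_le_one_right (abs_nonneg _) h).trans (hKC ω)
  refine integral_mul_eq_of_forall_bdd (hKm.mul hRm)
    (hKm.mul (stronglyMeasurable_condExp.mono hm).aestronglyMeasurable)
    (ae_of_all _ fun ω => by
      rw [abs_mul]; exact (mul_le_of_le_one_right (abs_nonneg _) (hR ω)).trans (hKC ω))
    hKρ hY fun g hg ⟨c, hc⟩ => ?_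
  have hgY : Integrable (fun ω => g (Y ω)) P := .of_bound
    (hg.comp_aemeasurable hY.aemeasurable).aestronglyMeasurable c (ae_of_all _ fun ω => hc _)
  have hRgY : Integrable (fun ω => R ω * g (Y ω)) P := hgY.bdd_mul hRm (ae_of_all _ hR)
  calc ∫ ω, K ω * R ω * g (Y ω) ∂P = ∫ ω, K ω * (R ω * g (Y ω)) ∂P := by simp_rw [mul_assoc]
    _ = ∫ ω, K ω * (P[fun ω' => R ω' * g (Y ω')|m]) ω ∂P :=
        (integral_mul_condExp hm hK hRgY (hRgY.bdd_mul hKm (ae_of_all _ hKC))).symm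
    _ = ∫ ω, K ω * (P[R|m]) ω * (P[fun ω' => g (Y ω')|m]) ω ∂P :=
        integral_congr_ae ((hfac g hg ⟨c, hc⟩).mono fun ω h => by
          by_cases hK0 : K ω = 0
          · simp [hK0]
          · show K ω * _ = K ω * _ * _
            rw [h hK0, mul_assoc])
    _ = ∫ ω, K ω * (P[R|m]) ω * g (Y ω) ∂P :=
        integral_mul_condExp hm (hK.mul stronglyMeasurable_condExp) hgY
          (hgY.bdd_mul (hKm.mul (stronglyMeasurable_condExp.mono hm).aestronglyMeasurable) hKρ)

theorem integral_mul_mul_sub_condExp_eq_zero_of_factorizes (hm : m ≤ mΩ) {K R Y : Ω → ℝ}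
    (hK : StronglyMeasurable[m] K) {C : ℝ} (hKC : ∀ ω, |K ω| ≤ C) (hRm : AEStronglyMeasurable R P)
    (hR : ∀ ω, |R ω| ≤ 1) (hY : Integrable Y P)
    (hfac : ∀ g : ℝ → ℝ, Measurable g → Bdd g → ∀ᵐ ω ∂P, K ω ≠ 0 →
      (P[fun ω' => R ω' * g (Y ω')|m]) ω = (P[R|m]) ω * (P[fun ω' => g (Y ω')|m]) ω) :
    ∫ ω, K ω * R ω * (Y ω - (P[Y|m]) ω) ∂P = 0 := by
  set ρ := P[R|m]
  set μY := P[Y|m]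
  have hKm : AEStronglyMeasurable K P := (hK.mono hm).aestronglyMeasurable
  have hKρ : ∀ᵐ ω ∂P, |K ω * ρ ω| ≤ C :=
    (ae_bdd_abs_condExp_of_ae_bdd_abs (R := (1 : ℝ)) (m := m) (ae_of_all _ hR)).mono fun ω h => by
      rw [abs_mul]; exact (mul_le_of_le_one_right (abs_nonneg _) h).trans (hKC ω)
  have hKρY : Integrable (fun ω => K ω * ρ ω * Y ω) P :=
    hY.bdd_mul (hKm.mul (stronglyMeasurable_condExp.mono hm).aestronglyMeasurable) hKρ
  have hKμYR : Integrable (fun ω => K ω * μY ω * R ω) P :=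
    (integrable_condExp.bdd_mul hKm (ae_of_all _ hKC)).mul_bdd hRm (ae_of_all _ hR)
  have hKR : ∀ ω, |K ω * R ω| ≤ C := fun ω => by
    rw [abs_mul]; exact (mul_le_of_le_one_right (abs_nonneg _) (hR ω)).trans (hKC ω)
  have hKRY : Integrable (fun ω => K ω * R ω * Y ω) P :=
    hY.bdd_mul (hKm.mul hRm) (ae_of_all _ hKR)
  calc ∫ ω, K ω * R ω * (Y ω - μY ω) ∂P
      = ∫ ω, K ω * R ω * Y ω ∂P - ∫ ω, K ω * μY ω * R ω ∂P := by
        rw [← integral_sub hKRY hKμYR]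
        congr 1 with ω
        ring
    _ = ∫ ω, K ω * ρ ω * Y ω ∂P - ∫ ω, K ω * μY ω * ρ ω ∂P := by
        rw [integral_mul_mul_eq_of_factorizes hm hK hKC hRm hR hY hfac,
          integral_mul_condExp (K := fun ω => K ω * μY ω) hm (hK.mul stronglyMeasurable_condExp)
            (.of_bound hRm 1 (ae_of_all _ hR)) hKμYR]
    _ = ∫ ω, K ω * ρ ω * μY ω ∂P - ∫ ω, K ω * μY ω * ρ ω ∂P := by
        rw [integral_mul_condExp (K := fun ω => K ω * ρ ω) hm (hK.mul stronglyMeasurable_condExp)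
          hY hKρY]
    _ = 0 := by
        rw [sub_eq_zero]
        congr 1 with ω
        ring

theorem ae_eq_condExp_m2_of_forall_setIntegral_prod_eq {U : Ω → β} {W : Ω → γ}
    (hU : Measurable U) (hW : Measurable W) {f g : Ω → ℝ} (hf : Integrable f P)
    (hg : Integrable g P) (hgm : StronglyMeasurable[m2 U W] g)
    (hprod : ∀ A B, MeasurableSet A → MeasurableSet B →
      ∫ ω in U ⁻¹' A ∩ W ⁻¹' B, g ω ∂P = ∫ ω in U ⁻¹' A ∩ W ⁻¹' B, f ω ∂P) :
    g =ᵐ[P] P[f|m2 U W] := by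
  have hUW : Measurable fun ω => (U ω, W ω) := hU.prodMk hW
  refine ae_eq_condExp_of_forall_setIntegral_eq hUW.comap_le hf (fun s _ _ => hg.integrableOn) ?_
    hgm.aestronglyMeasurable
  rintro _ ⟨t, ht, rfl⟩ -
  induction t, ht using MeasurableSpace.induction_on_inter generateFrom_prod.symm isPiSystem_prod
    with
  | empty => simp
  | basic t ht =>
    obtain ⟨A, hA, B, hB, rfl⟩ := ht
    exact hprod A B hA hB
  | compl t htm ih =>
    have huniv := hprod Set.univ Set.univ MeasurableSet.univ MeasurableSet.univ
    simp only [Set.preimage_univ, Set.inter_univ, Measure.restrict_univ] at huniv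
    rw [Set.preimage_compl, setIntegral_compl (hUW htm) hg, setIntegral_compl (hUW htm) hf, ih,
      huniv]
  | iUnion t hdisj htm ih =>
    have hdisj' := hdisj.mono fun i j h => h.preimage (fun ω => (U ω, W ω))
    rw [Set.preimage_iUnion, integral_iUnion (fun i => hUW (htm i)) hdisj' hg.integrableOn,
      integral_iUnion (fun i => hUW (htm i)) hdisj' hf.integrableOn]
    exact tsum_congr ih

theorem mX_le_m2 (X : Ω → 𝒳) (U : Ω → β) : mX X ≤ m2 X U :=
  (measurable_fst.comp (comap_measurable fun ω => (X ω, U ω))).comap_le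

theorem condExp_m2_eq_condExp_mX_of_condIndepBdd {X : Ω → 𝒳} {U : Ω → β} {T : Ω → ℝ}
    (hX : Measurable X) (hU : Measurable U) (hT : Measurable T) {C : ℝ} (hTC : ∀ ω, |T ω| ≤ C)
    (hCI : CondIndepBdd P (mX X) U T) :
    P[T|m2 X U] =ᵐ[P] P[T|mX X] := by
  have hTi : Integrable T P := .of_bound hT.aestronglyMeasurable C (ae_of_all _ hTC)
  refine (ae_eq_condExp_m2_of_forall_setIntegral_prod_eq hX hU hTi integrable_condExp
    (stronglyMeasurable_condExp.mono (mX_le_m2 X U)) fun A B hA hB => ?_).symm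
  -- `T` equals its clamp to `[-C, C]`, a bounded test function of `T`
  set clamp : ℝ → ℝ := fun t => max (-C) (min C t)
  have hclamp : ∀ ω, clamp (T ω) = T ω := fun ω => by
    simp [clamp, (abs_le.mp (hTC ω)).1, (abs_le.mp (hTC ω)).2]
  have hclamp_bdd : Bdd clamp := ⟨|C|, fun t => abs_le.mpr
    ⟨(neg_le_neg (le_abs_self C)).trans (le_max_left _ _),
      max_le (neg_le_abs C) ((min_le_left _ _).trans (le_abs_self C))⟩⟩
  set f : β → ℝ := B.indicator 1
  have hf : Measurable f := measurable_const.indicator hB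
  have hf_bdd : ∀ b, |f b| ≤ 1 := fun b => by by_cases hb : b ∈ B <;> simp [f, hb]
  have hfU_mul : ∀ {h : Ω → ℝ}, Integrable h P → Integrable (fun ω => f (U ω) * h ω) P :=
    fun hh => hh.bdd_mul (hf.comp hU).aestronglyMeasurable (ae_of_all _ fun ω => hf_bdd _)
  have hind : ∀ h : Ω → ℝ, (U ⁻¹' B).indicator h = fun ω => f (U ω) * h ω := fun h =>
    funext fun ω => by by_cases hω : U ω ∈ B <;> simp [f, hω]
  have hA' : MeasurableSet[mX X] (X ⁻¹' A) := ⟨A, hA, rfl⟩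
  have hCI' := hCI f hf ⟨1, hf_bdd⟩ clamp (by fun_prop) hclamp_bdd
  simp only [hclamp] at hCI'
  rw [← setIntegral_indicator (hU hB), ← setIntegral_indicator (hU hB), hind, hind,
    ← setIntegral_condExp hX.comap_le (hfU_mul integrable_condExp) hA',
    ← setIntegral_condExp hX.comap_le (hfU_mul hTi) hA']
  refine integral_congr_ae (ae_restrict_of_ae ?_)
  filter_upwards [hCI', condExp_mul_of_stronglyMeasurable_right (g := P[T|mX X])
    stronglyMeasurable_condExp (hfU_mul integrable_condExp)
    (.of_bound (hf.comp hU).aestronglyMeasurable 1 (ae_of_all _ fun ω => hf_bdd _))]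
    with ω h₁ h₂
  exact h₂.trans h₁.symm

theorem m2_le_m3 (X : Ω → 𝒳) (V : Ω → γ) (S : Ω → 𝒮) : m2 X S ≤ m3 X V S :=
  ((measurable_fst.prodMk (measurable_snd.comp measurable_snd)).comp
    (comap_measurable fun ω => (X ω, V ω, S ω))).comap_le

theorem integral_mul_mul_sub_condExp_m2_eq_zero {X : Ω → 𝒳} {S : Ω → 𝒮} {T Y : Ω → ℝ}
    (hX : Measurable X) (hS : Measurable S) (hT : Measurable T) (hY : Measurable Y)
    (hTb : ∀ ω, |T ω| ≤ 1) (hYi : Integrable Y P) {q : 𝒳 × 𝒮 → ℝ} (hq : Measurable q)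
    (hTq : P[T|m3 X Y S] =ᵐ[P] fun ω => q (X ω, S ω)) {k : 𝒳 × 𝒮 → ℝ} (hk : Measurable k)
    (hk1 : ∀ p, |k p| ≤ 1) :
    ∫ ω, T ω * (k (X ω, S ω) * (Y ω - (P[Y|m2 X S]) ω)) ∂P = 0 := by
  set Z : Ω → ℝ := fun ω => Y ω - (P[Y|m2 X S]) ω
  have hXS : Measurable fun ω => (X ω, S ω) := hX.prodMk hS
  have hkZ : Integrable (fun ω => k (X ω, S ω) * Z ω) P :=
    (hYi.sub integrable_condExp).bdd_mul (hk.comp hXS).aestronglyMeasurable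
      (ae_of_all _ fun ω => hk1 _)
  have hYm : Measurable[m3 X Y S] Y :=
    measurable_fst.comp (measurable_snd.comp (comap_measurable fun ω => (X ω, Y ω, S ω)))
  have hkZm : StronglyMeasurable[m3 X Y S] fun ω => k (X ω, S ω) * Z ω :=
    ((hk.comp (comap_measurable _)).stronglyMeasurable.mono (m2_le_m3 X Y S)).mul
      (hYm.stronglyMeasurable.sub (stronglyMeasurable_condExp.mono (m2_le_m3 X Y S)))
  have hq_bdd : ∀ᵐ ω ∂P, |(k * q) (X ω, S ω)| ≤ 1 := by
    filter_upwards [hTq, ae_bdd_abs_condExp_of_ae_bdd_abs (R := (1 : ℝ)) (m := m3 X Y S)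
      (ae_of_all P hTb)] with ω h₁ h₂
    rw [Pi.mul_apply, abs_mul, ← h₁]
    exact mul_le_one₀ (hk1 _) (abs_nonneg _) h₂
  calc ∫ ω, T ω * (k (X ω, S ω) * Z ω) ∂P = ∫ ω, (k (X ω, S ω) * Z ω) * T ω ∂P := by
        simp_rw [mul_comm (T _)]
    _ = ∫ ω, (k (X ω, S ω) * Z ω) * (P[T|m3 X Y S]) ω ∂P :=
        (integral_mul_condExp (m := m3 X Y S) (hX.prodMk (hY.prodMk hS)).comap_le hkZm
          (.of_bound hT.aestronglyMeasurable 1 (ae_of_all _ hTb))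
          (hkZ.mul_bdd hT.aestronglyMeasurable (ae_of_all _ hTb))).symm
    _ = ∫ ω, (k * q) (X ω, S ω) * Z ω ∂P :=
        integral_congr_ae (hTq.mono fun ω h => by simp only [h, Pi.mul_apply]; ring)
    _ = 0 := integral_comp_mul_sub_eq_zero_of_ae_eq_condExp hXS (hk.mul hq) hYi
        (hYi.bdd_mul ((hk.mul hq).comp hXS).aestronglyMeasurable hq_bdd) (ae_eq_refl _)

theorem condExp_m3_eq_condExp_m2_of_binary {X : Ω → 𝒳} {S : Ω → 𝒮} {T Y : Ω → ℝ}
    (hX : Measurable X) (hS : Measurable S) (hT : Measurable T) (hY : Measurable Y)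
    (hT01 : ∀ ω, T ω = 0 ∨ T ω = 1) (hYi : Integrable Y P) {q : 𝒳 × 𝒮 → ℝ} (hq : Measurable q)
    (hTq : P[T|m3 X Y S] =ᵐ[P] fun ω => q (X ω, S ω)) :
    P[Y|m3 X T S] =ᵐ[P] P[Y|m2 X S] := by
  have hXTS : Measurable fun ω => (X ω, T ω, S ω) := hX.prodMk (hT.prodMk hS)
  have hXS : Measurable fun ω => (X ω, S ω) := hX.prodMk hS
  have hTb : ∀ ω, |T ω| ≤ 1 := fun ω => by rcases hT01 ω with h | h <;> simp [h]
  refine (ae_eq_condExp_of_forall_setIntegral_eq hXTS.comap_le hYi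
    (fun s _ _ => integrable_condExp.integrableOn) ?_
    (stronglyMeasurable_condExp.mono (m2_le_m3 X T S)).aestronglyMeasurable).symm
  rintro _ ⟨E, hE, rfl⟩ -
  set Z : Ω → ℝ := fun ω => Y ω - (P[Y|m2 X S]) ω
  -- for binary `T`, the indicator of `E` at `(X, T, S)` is affine in `T` with
  -- coefficients that are functions of `(X, S)`
  set k₀ : 𝒳 × 𝒮 → ℝ := fun p => E.indicator 1 (p.1, 0, p.2)
  set k₁ : 𝒳 × 𝒮 → ℝ := fun p => E.indicator 1 (p.1, 1, p.2) - k₀ p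
  have hk₀ : Measurable k₀ := (measurable_const.indicator hE).comp
    (measurable_fst.prodMk (measurable_const.prodMk measurable_snd))
  have hk₁ : Measurable k₁ := ((measurable_const.indicator hE).comp
    (measurable_fst.prodMk (measurable_const.prodMk measurable_snd))).sub hk₀
  have hk₀_bdd : ∀ p, |k₀ p| ≤ 1 := fun p => by
    by_cases h : (p.1, (0 : ℝ), p.2) ∈ E <;> simp [k₀, h]
  have hk₁_bdd : ∀ p, |k₁ p| ≤ 1 := fun p => by
    by_cases h₀ : (p.1, (0 : ℝ), p.2) ∈ E <;> by_cases h₁ : (p.1, (1 : ℝ), p.2) ∈ E <;>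
      simp [k₀, k₁, h₀, h₁]
  have hsplit : ∀ ω, ((fun ω => (X ω, T ω, S ω)) ⁻¹' E).indicator Z ω
      = k₀ (X ω, S ω) * Z ω + T ω * (k₁ (X ω, S ω) * Z ω) := fun ω => by
    rcases hT01 ω with h | h <;> by_cases h₀ : (X ω, (0 : ℝ), S ω) ∈ E <;>
      by_cases h₁ : (X ω, (1 : ℝ), S ω) ∈ E <;> simp [k₀, k₁, h, h₀, h₁]
  have hk₀Z : Integrable (fun ω => k₀ (X ω, S ω) * Z ω) P :=
    (hYi.sub integrable_condExp).bdd_mul (hk₀.comp hXS).aestronglyMeasurable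
      (ae_of_all _ fun ω => hk₀_bdd _)
  have hTk₁Z : Integrable (fun ω => T ω * (k₁ (X ω, S ω) * Z ω)) P :=
    ((hYi.sub integrable_condExp).bdd_mul (hk₁.comp hXS).aestronglyMeasurable
      (ae_of_all _ fun ω => hk₁_bdd _)).bdd_mul hT.aestronglyMeasurable (ae_of_all _ hTb)
  have h₀ : ∫ ω, k₀ (X ω, S ω) * Z ω ∂P = 0 :=
    integral_comp_mul_sub_eq_zero_of_ae_eq_condExp hXS hk₀ hYi
      (hYi.bdd_mul (hk₀.comp hXS).aestronglyMeasurable (ae_of_all _ fun ω => hk₀_bdd _))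
      (ae_eq_refl _)
  symm
  rw [← sub_eq_zero, ← integral_sub hYi.integrableOn integrable_condExp.integrableOn,
    ← integral_indicator (hXTS hE), integral_congr_ae (ae_of_all _ hsplit),
    integral_add hk₀Z hTk₁Z, h₀,
    integral_mul_mul_sub_condExp_m2_eq_zero hX hS hT hY hTb hYi hq hTq hk₁ hk₁_bdd, add_zero]

end ConditionalExpectation

section DoubleRobustness

variable {Ω 𝒳 𝒮 : Type*} {mΩ : MeasurableSpace Ω} [MeasurableSpace 𝒳] [MeasurableSpace 𝒮]
  {P : Measure Ω} [IsFiniteMeasure P]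

theorem inv_mem_Icc_of_le {ε x : ℝ} (hε : 0 < ε) (hx : ε ≤ x) : x⁻¹ ∈ Set.Icc 0 ε⁻¹ :=
  ⟨inv_nonneg.mpr (hε.le.trans hx), inv_anti₀ hε hx⟩

theorem aipw_decomposition (t ρ y m m₀ μ μ₀ e e₀ r r₀ : ℝ) (he₀ : e₀ ≠ 0) (hr₀ : r₀ ≠ 0) :
    μ₀ + t * ρ / (e₀ * r₀) * (y - m₀) + t / e₀ * (m₀ - μ₀)
      = y + e * (r - r₀) / (e₀ * r₀) * (m - m₀) + (e - e₀) / e₀ * (μ - μ₀)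
        + (t * (e₀ * r₀)⁻¹ * ρ * (y - m) + t * ((e₀ * r₀)⁻¹ * (m - m₀)) * (ρ - r)
          + (r * (e₀ * r₀)⁻¹ * (m - m₀) + e₀⁻¹ * (m₀ - μ₀)) * (t - e)
          - (1 - e * e₀⁻¹) * (y - μ) - e * e₀⁻¹ * (y - m)) := by
  field_simp
  ring

theorem integral_aipw_sub_eq_of_residuals {T R Y E E₀ Rr R₀ M M₀ Mu Mu₀ : Ω → ℝ}
    (hT : MemLp T ∞ P) (hR : MemLp R ∞ P) (hE : MemLp E ∞ P) (hRr : MemLp Rr ∞ P)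
    (hE₀ : MemLp E₀ ∞ P) (hR₀ : MemLp R₀ ∞ P) (hE₀i : MemLp (fun ω => (E₀ ω)⁻¹) ∞ P)
    (hφ : MemLp (fun ω => (E₀ ω * R₀ ω)⁻¹) ∞ P) (hE₀0 : ∀ ω, E₀ ω ≠ 0) (hR₀0 : ∀ ω, R₀ ω ≠ 0)
    (hY : Integrable Y P) (hM : Integrable M P) (hM₀ : Integrable M₀ P) (hMu : Integrable Mu P)
    (hMu₀ : Integrable Mu₀ P)
    (h₁ : ∫ ω, T ω * (E₀ ω * R₀ ω)⁻¹ * R ω * (Y ω - M ω) ∂P = 0)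
    (h₂ : ∫ ω, T ω * ((E₀ ω * R₀ ω)⁻¹ * (M ω - M₀ ω)) * (R ω - Rr ω) ∂P = 0)
    (h₃ : ∫ ω, (Rr ω * (E₀ ω * R₀ ω)⁻¹ * (M ω - M₀ ω) + (E₀ ω)⁻¹ * (M₀ ω - Mu₀ ω))
      * (T ω - E ω) ∂P = 0)
    (h₄ : ∫ ω, (1 - E ω * (E₀ ω)⁻¹) * (Y ω - Mu ω) ∂P = 0)
    (h₅ : ∫ ω, E ω * (E₀ ω)⁻¹ * (Y ω - M ω) ∂P = 0) :
    (∫ ω, Mu₀ ω + T ω * R ω / (E₀ ω * R₀ ω) * (Y ω - M₀ ω) + T ω / E₀ ω * (M₀ ω - Mu₀ ω) ∂P)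
        - ∫ ω, Y ω ∂P
      = (∫ ω, E ω * (Rr ω - R₀ ω) / (E₀ ω * R₀ ω) * (M ω - M₀ ω) ∂P)
        + ∫ ω, (E ω - E₀ ω) / E₀ ω * (Mu ω - Mu₀ ω) ∂P := by
  have hb₁ : Integrable (fun ω => E ω * (Rr ω - R₀ ω) / (E₀ ω * R₀ ω) * (M ω - M₀ ω)) P :=
    (hM.sub hM₀).mul_of_top_right (hφ.mul' (r := ∞) ((hRr.sub hR₀).mul' (r := ∞) hE))
  have hb₂ : Integrable (fun ω => (E ω - E₀ ω) / E₀ ω * (Mu ω - Mu₀ ω)) P :=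
    (hMu.sub hMu₀).mul_of_top_right (hE₀i.mul' (r := ∞) (hE.sub hE₀))
  have hφM : Integrable (fun ω => (E₀ ω * R₀ ω)⁻¹ * (M ω - M₀ ω)) P :=
    (hM.sub hM₀).mul_of_top_right hφ
  have hc₁ : Integrable (fun ω => T ω * (E₀ ω * R₀ ω)⁻¹ * R ω * (Y ω - M ω)) P :=
    (hY.sub hM).mul_of_top_right (hR.mul' (r := ∞) (hφ.mul' (r := ∞) hT))
  have hc₂ : Integrable (fun ω => T ω * ((E₀ ω * R₀ ω)⁻¹ * (M ω - M₀ ω)) * (R ω - Rr ω)) P :=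
    (hφM.mul_of_top_right hT).mul_of_top_left (hR.sub hRr)
  have hc₃ : Integrable (fun ω => (Rr ω * (E₀ ω * R₀ ω)⁻¹ * (M ω - M₀ ω)
      + (E₀ ω)⁻¹ * (M₀ ω - Mu₀ ω)) * (T ω - E ω)) P :=
    (((hM.sub hM₀).mul_of_top_right (hφ.mul' (r := ∞) hRr)).add
      ((hM₀.sub hMu₀).mul_of_top_right hE₀i)).mul_of_top_left (hT.sub hE)
  have hc₄ : Integrable (fun ω => (1 - E ω * (E₀ ω)⁻¹) * (Y ω - Mu ω)) P :=
    (hY.sub hMu).mul_of_top_right ((memLp_const 1).sub (hE₀i.mul' (r := ∞) hE))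
  have hc₅ : Integrable (fun ω => E ω * (E₀ ω)⁻¹ * (Y ω - M ω)) P :=
    (hY.sub hM).mul_of_top_right (hE₀i.mul' (r := ∞) hE)
  rw [integral_congr_ae (ae_of_all _ fun ω => aipw_decomposition (T ω) (R ω) (Y ω) (M ω) (M₀ ω)
    (Mu ω) (Mu₀ ω) (E ω) (E₀ ω) (Rr ω) (R₀ ω) (hE₀0 ω) (hR₀0 ω))]
  rw [integral_add (by fun_prop) (by fun_prop), integral_add (by fun_prop) hb₂,
    integral_add hY hb₁, integral_sub (by fun_prop) hc₅, integral_sub (by fun_prop) hc₄,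
    integral_add (by fun_prop) hc₃, integral_add hc₁ hc₂, h₁, h₂, h₃, h₄, h₅]
  ring

theorem integral_treated_mul_sub_labeling_eq_zero {X : Ω → 𝒳} {T R : Ω → ℝ} {S0 S1 : Ω → 𝒮}
    (hX : Measurable X) (hT : Measurable T) (hR : Measurable R) (hS0 : Measurable S0)
    (hS1 : Measurable S1) (hT01 : ∀ ω, T ω = 0 ∨ T ω = 1) (hR01 : ∀ ω, R ω = 0 ∨ R ω = 1)
    {r : ℝ → 𝒳 → 𝒮 → ℝ}
    (hrSpec : (fun ω => r (T ω) (X ω) (obs T S0 S1 ω)) =ᵐ[P] P[R|m3 T X (obs T S0 S1)])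
    {k : 𝒳 × 𝒮 → ℝ} (hk : Measurable k) (hki : Integrable (fun ω => k (X ω, S1 ω)) P) :
    ∫ ω, T ω * k (X ω, S1 ω) * (R ω - r 1 (X ω) (S1 ω)) ∂P = 0 := by
  have hV : Measurable fun ω => (T ω, X ω, obs T S0 S1 ω) :=
    hT.prodMk (hX.prodMk (Measurable.ite (hT (measurableSet_singleton 1)) hS1 hS0))
  have hG : Measurable fun p : ℝ × 𝒳 × 𝒮 => p.1 * k (p.2.1, p.2.2) := by fun_prop
  have hTR : MemLp (fun ω => T ω * R ω) ∞ P :=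
    memLp_top_of_mem_Icc (a := 0) (b := 1) (hT.mul hR) fun ω => by
      rcases hT01 ω with h | h <;> rcases hR01 ω with h' | h' <;> simp [h, h']
  have hobs : ∀ ω, T ω * k (X ω, obs T S0 S1 ω) = T ω * k (X ω, S1 ω) := fun ω => by
    rcases hT01 ω with h | h <;> simp [obs, h]
  have hKR : Integrable (fun ω => T ω * k (X ω, obs T S0 S1 ω) * R ω) P :=
    (hki.mul_of_top_right hTR).congr (ae_of_all _ fun ω => by
      simp only [Pi.mul_apply, hobs]; ring)
  rw [← integral_comp_mul_sub_eq_zero_of_ae_eq_condExp hV hG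
    ((memLp_top_of_mem_Icc (a := 0) (b := 1) hR fun ω => by
      rcases hR01 ω with h | h <;> simp [h]).integrable le_top)
    hKR hrSpec]
  refine integral_congr_ae (ae_of_all _ fun ω => ?_)
  rcases hT01 ω with h | h <;> simp [obs, h]

theorem integral_mul_sub_treatment_eq_zero {X : Ω → 𝒳} {S : Ω → 𝒮} {T Y : Ω → ℝ}
    (hX : Measurable X) (hS : Measurable S) (hY : Measurable Y) (hT : MemLp T ∞ P) {e : 𝒳 → ℝ}
    (hTcond : P[T|m3 X Y S] =ᵐ[P] fun ω => e (X ω)) {k : 𝒳 × 𝒮 → ℝ} (hk : Measurable k)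
    (hki : Integrable (fun ω => k (X ω, S ω)) P) :
    ∫ ω, k (X ω, S ω) * (T ω - e (X ω)) ∂P = 0 :=
  integral_comp_mul_sub_eq_zero_of_ae_eq_condExp (hX.prodMk (hY.prodMk hS))
    (G := fun p => k (p.1, p.2.2)) (by fun_prop) (hT.integrable le_top)
    (hki.mul_of_top_left hT) hTcond.symm

theorem integral_treated_labeled_mul_sub_eq_zero {X : Ω → 𝒳} {S : Ω → 𝒮} {T R Y M : Ω → ℝ}
    (hX : Measurable X) (hT : Measurable T) (hR : Measurable R) (hS : Measurable S)
    (hT01 : ∀ ω, T ω = 0 ∨ T ω = 1) (hR01 : ∀ ω, R ω = 0 ∨ R ω = 1) (hY : Integrable Y P)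
    (hfac : ∀ g : ℝ → ℝ, Measurable g → Bdd g → ∀ᵐ ω ∂P, T ω = 1 →
      (P[fun ω' => R ω' * g (Y ω')|m3 X T S]) ω
        = (P[R|m3 X T S]) ω * (P[fun ω' => g (Y ω')|m3 X T S]) ω)
    (hM : P[Y|m3 X T S] =ᵐ[P] M) {k : 𝒳 × 𝒮 → ℝ} (hk : Measurable k) {C : ℝ}
    (hkC : ∀ p, |k p| ≤ C) :
    ∫ ω, T ω * k (X ω, S ω) * R ω * (Y ω - M ω) ∂P = 0 := by
  have hG : Measurable fun p : 𝒳 × ℝ × 𝒮 => p.2.1 * k (p.1, p.2.2) := by fun_prop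
  have hTk : ∀ ω, |T ω * k (X ω, S ω)| ≤ C := fun ω => by
    rw [abs_mul]
    exact (mul_le_of_le_one_left (abs_nonneg _) (by rcases hT01 ω with h | h <;> simp [h])).trans
      (hkC _)
  rw [← integral_mul_mul_sub_condExp_eq_zero_of_factorizes (m := m3 X T S)
    (K := fun ω => T ω * k (X ω, S ω)) (hX.prodMk (hT.prodMk hS)).comap_le
    (hG.comp (comap_measurable _)).stronglyMeasurable hTk hR.aestronglyMeasurable
    (fun ω => by rcases hR01 ω with h | h <;> simp [h]) hY
    fun g hg hgb => (hfac g hg hgb).mono fun ω h hK0 =>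
      h ((hT01 ω).resolve_left fun h0 => hK0 (by simp [h0]))]
  exact integral_congr_ae (hM.mono fun ω h => by simp only [h])

theorem integral_aipw_sub_integral_eq {X : Ω → 𝒳} {T R : Ω → ℝ} {S0 S1 : Ω → 𝒮}
    {Y0 Y1 : Ω → ℝ} (hX : Measurable X) (hT : Measurable T) (hR : Measurable R)
    (hS0 : Measurable S0) (hS1 : Measurable S1) (hY1 : Measurable Y1)
    (hT01 : ∀ ω, T ω = 0 ∨ T ω = 1) (hR01 : ∀ ω, R ω = 0 ∨ R ω = 1)
    {e : 𝒳 → ℝ} (he : Measurable e) (heRange : ∀ x, e x ∈ Set.Icc (0 : ℝ) 1)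
    (heSpec : (fun ω => e (X ω)) =ᵐ[P] P[T|mX X])
    {r : ℝ → 𝒳 → 𝒮 → ℝ} (hr : Measurable fun p : ℝ × 𝒳 × 𝒮 => r p.1 p.2.1 p.2.2)
    (hrRange : ∀ t x s, r t x s ∈ Set.Icc (0 : ℝ) 1)
    (hrSpec : (fun ω => r (T ω) (X ω) (obs T S0 S1 ω)) =ᵐ[P] P[R|m3 T X (obs T S0 S1)])
    (hCI : CondIndepBdd P (mX X) (fun ω => (Y1 ω, S1 ω)) T)
    (hfac : ∀ g : ℝ → ℝ, Measurable g → Bdd g → ∀ᵐ ω ∂P, T ω = 1 →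
      (P[fun ω' => R ω' * g (Y1 ω')|m3 X T S1]) ω
        = (P[R|m3 X T S1]) ω * (P[fun ω' => g (Y1 ω')|m3 X T S1]) ω)
    {ε : ℝ} (hε0 : 0 < ε)
    {mt : ℝ → 𝒳 → 𝒮 → ℝ} (hmt : Measurable fun p : ℝ × 𝒳 × 𝒮 => mt p.1 p.2.1 p.2.2)
    (hmtSpec : (fun ω => mt 1 (X ω) (S1 ω)) =ᵐ[P] P[Y1|m2 X S1])
    {mu : ℝ → 𝒳 → ℝ} (hmuSpec : (fun ω => mu 1 (X ω)) =ᵐ[P] P[Y1|mX X])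
    {e0 : 𝒳 → ℝ} (he0 : Measurable e0) (he0Range : ∀ x, e0 x ∈ Set.Icc ε (1 - ε))
    {r0 : ℝ → 𝒳 → 𝒮 → ℝ} (hr0 : Measurable fun p : ℝ × 𝒳 × 𝒮 => r0 p.1 p.2.1 p.2.2)
    (hr0Range : ∀ t x s, r0 t x s ∈ Set.Icc ε 1)
    {mu0 : ℝ → 𝒳 → ℝ} (hmu0 : Measurable fun p : ℝ × 𝒳 => mu0 p.1 p.2)
    {mt0 : ℝ → 𝒳 → 𝒮 → ℝ} (hmt0 : Measurable fun p : ℝ × 𝒳 × 𝒮 => mt0 p.1 p.2.1 p.2.2)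
    (hY1i : Integrable Y1 P) (hmt0i : Integrable (fun ω => mt0 1 (X ω) (S1 ω)) P)
    (hmu0i : Integrable (fun ω => mu0 1 (X ω)) P) :
    (∫ ω, mu0 1 (X ω)
          + T ω * R ω / (e0 (X ω) * r0 1 (X ω) (obs T S0 S1 ω))
            * (obs T Y0 Y1 ω - mt0 1 (X ω) (obs T S0 S1 ω))
          + T ω / e0 (X ω) * (mt0 1 (X ω) (obs T S0 S1 ω) - mu0 1 (X ω)) ∂P)
        - ∫ ω, Y1 ω ∂P
      = (∫ ω, e (X ω) * (r 1 (X ω) (S1 ω) - r0 1 (X ω) (S1 ω))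
            / (e0 (X ω) * r0 1 (X ω) (S1 ω))
            * (mt 1 (X ω) (S1 ω) - mt0 1 (X ω) (S1 ω)) ∂P)
        + ∫ ω, (e (X ω) - e0 (X ω)) / e0 (X ω) * (mu 1 (X ω) - mu0 1 (X ω)) ∂P := by
  have hT_mem : ∀ ω, T ω ∈ Set.Icc (0 : ℝ) 1 := fun ω => by rcases hT01 ω with h | h <;> simp [h]
  have hR_mem : ∀ ω, R ω ∈ Set.Icc (0 : ℝ) 1 := fun ω => by rcases hR01 ω with h | h <;> simp [h]
  have he0_inv : ∀ x, (e0 x)⁻¹ ∈ Set.Icc 0 ε⁻¹ := fun x => inv_mem_Icc_of_le hε0 (he0Range x).1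
  have hφ : ∀ x s, (e0 x * r0 1 x s)⁻¹ ∈ Set.Icc 0 (ε * ε)⁻¹ := fun x s =>
    inv_mem_Icc_of_le (mul_pos hε0 hε0)
      (mul_le_mul (he0Range x).1 (hr0Range 1 x s).1 hε0.le (hε0.le.trans (he0Range x).1))
  have hT_top : MemLp T ∞ P := memLp_top_of_mem_Icc hT hT_mem
  have he_top : MemLp (fun ω => e (X ω)) ∞ P :=
    memLp_top_of_mem_Icc (by fun_prop) fun ω => heRange _
  have hr_top : MemLp (fun ω => r 1 (X ω) (S1 ω)) ∞ P :=
    memLp_top_of_mem_Icc (by fun_prop) fun ω => hrRange _ _ _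
  have he0_inv_top : MemLp (fun ω => (e0 (X ω))⁻¹) ∞ P :=
    memLp_top_of_mem_Icc (by fun_prop) fun ω => he0_inv _
  have hφ_top : MemLp (fun ω => (e0 (X ω) * r0 1 (X ω) (S1 ω))⁻¹) ∞ P :=
    memLp_top_of_mem_Icc (by fun_prop) fun ω => hφ _ _
  have hmti : Integrable (fun ω => mt 1 (X ω) (S1 ω)) P := integrable_condExp.congr hmtSpec.symm
  have hTcond : P[T|m3 X Y1 S1] =ᵐ[P] fun ω => e (X ω) :=
    (condExp_m2_eq_condExp_mX_of_condIndepBdd hX (hY1.prodMk hS1) hT (C := 1)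
      (fun ω => by rcases hT01 ω with h | h <;> simp [h]) hCI).trans heSpec.symm
  have h₁ := integral_treated_labeled_mul_sub_eq_zero hX hT hR hS1 hT01 hR01 hY1i hfac
    ((condExp_m3_eq_condExp_m2_of_binary hX hS1 hT hY1 hT01 hY1i (he.comp measurable_fst)
      hTcond).trans hmtSpec.symm) (k := fun p => (e0 p.1 * r0 1 p.1 p.2)⁻¹) (by fun_prop)
    fun p => (abs_of_nonneg (hφ _ _).1).trans_le (hφ _ _).2
  have h₂ := integral_treated_mul_sub_labeling_eq_zero hX hT hR hS0 hS1 hT01 hR01 hrSpec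
    (k := fun p => (e0 p.1 * r0 1 p.1 p.2)⁻¹ * (mt 1 p.1 p.2 - mt0 1 p.1 p.2)) (by fun_prop)
    ((hmti.sub hmt0i).mul_of_top_right hφ_top)
  have h₃ := integral_mul_sub_treatment_eq_zero hX hS1 hY1 hT_top hTcond
    (k := fun p => r 1 p.1 p.2 * (e0 p.1 * r0 1 p.1 p.2)⁻¹ * (mt 1 p.1 p.2 - mt0 1 p.1 p.2)
      + (e0 p.1)⁻¹ * (mt0 1 p.1 p.2 - mu0 1 p.1)) (by fun_prop)
    (((hmti.sub hmt0i).mul_of_top_right (hφ_top.mul' (r := ∞) hr_top)).add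
      ((hmt0i.sub hmu0i).mul_of_top_right he0_inv_top))
  have h₄ := integral_comp_mul_sub_eq_zero_of_ae_eq_condExp hX
    (G := fun x => 1 - e x * (e0 x)⁻¹) (by fun_prop) hY1i
    (hY1i.mul_of_top_right ((memLp_const 1).sub (he0_inv_top.mul' (r := ∞) he_top))) hmuSpec
  have h₅ := integral_comp_mul_sub_eq_zero_of_ae_eq_condExp (hX.prodMk hS1)
    (G := fun p => e p.1 * (e0 p.1)⁻¹) (by fun_prop) hY1i
    (hY1i.mul_of_top_right (he0_inv_top.mul' (r := ∞) he_top)) hmtSpec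
  convert integral_aipw_sub_eq_of_residuals hT_top (memLp_top_of_mem_Icc hR hR_mem) he_top hr_top
    (memLp_top_of_mem_Icc (f := fun ω => e0 (X ω)) (by fun_prop) fun ω => he0Range _)
    (memLp_top_of_mem_Icc (f := fun ω => r0 1 (X ω) (S1 ω)) (by fun_prop)
      fun ω => hr0Range _ _ _) he0_inv_top hφ_top
    (fun ω => (hε0.trans_le (he0Range _).1).ne') (fun ω => (hε0.trans_le (hr0Range _ _ _).1).ne')
    hY1i hmti hmt0i (integrable_condExp.congr hmuSpec.symm) hmu0i h₁ h₂ h₃ h₄ h₅ using 3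
  funext ω
  rcases hT01 ω with h | h <;> simp [obs, h]

end DoubleRobustness

theorem statement11_general
    {Ω 𝒳 𝒮 : Type*} [MeasurableSpace Ω] [MeasurableSpace 𝒳] [MeasurableSpace 𝒮]
    (P : Measure Ω) [IsProbabilityMeasure P]
    -- the random variables of the model
    (X : Ω → 𝒳) (T R : Ω → ℝ) (S0 S1 : Ω → 𝒮) (Y0 Y1 : Ω → ℝ)
    (hX : Measurable X) (hT : Measurable T) (hR : Measurable R)
    (hS0 : Measurable S0) (hS1 : Measurable S1)
    (hY1 : Measurable Y1)
    (hT01 : ∀ ω, T ω = 0 ∨ T ω = 1) (hR01 : ∀ ω, R ω = 0 ∨ R ω = 1)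
    -- the treatment propensity e* (note that E[T|σ(X)] = P(T=1|σ(X)))
    (e : 𝒳 → ℝ) (he : Measurable e) (heRange : ∀ x, e x ∈ Set.Icc (0 : ℝ) 1)
    (heSpec : (fun ω => e (X ω)) =ᵐ[P] P[T|mX X])
    -- the labeling propensity r* (note that E[R|σ(T,X,S)] = P(R=1|σ(T,X,S)))
    (r : ℝ → 𝒳 → 𝒮 → ℝ) (hr : Measurable fun p : ℝ × 𝒳 × 𝒮 => r p.1 p.2.1 p.2.2)
    (hrRange : ∀ t x s, r t x s ∈ Set.Icc (0 : ℝ) 1)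
    (hrSpec : (fun ω => r (T ω) (X ω) (obs T S0 S1 ω)) =ᵐ[P] P[R|m3 T X (obs T S0 S1)])
    -- Assumption 1 (unconfoundedness)
    (h1i : ∀ t : ℝ, t = 0 ∨ t = 1 →
      CondIndepBdd P (mX X) (fun ω => (pot Y0 Y1 t ω, pot S0 S1 t ω)) T)
    (h1ii : ∀ t : ℝ, t = 0 ∨ t = 1 → ∀ g : ℝ → ℝ, Measurable g → Bdd g →
      ∀ᵐ ω ∂P, T ω = t →
        (P[fun ω' => R ω' * g (pot Y0 Y1 t ω')|m3 X T (pot S0 S1 t)]) ω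
          = (P[R|m3 X T (pot S0 S1 t)]) ω
            * (P[fun ω' => g (pot Y0 Y1 t ω')|m3 X T (pot S0 S1 t)]) ω)
    -- Assumption 2 (strict overlap)
    (ε : ℝ) (hε0 : 0 < ε)
    -- the outcome regressions μ̃* and μ*
    (mt : ℝ → 𝒳 → 𝒮 → ℝ) (hmt : Measurable fun p : ℝ × 𝒳 × 𝒮 => mt p.1 p.2.1 p.2.2)
    (hmtSpec : ∀ t : ℝ, t = 0 ∨ t = 1 →
      (fun ω => mt t (X ω) (pot S0 S1 t ω)) =ᵐ[P] P[pot Y0 Y1 t|m2 X (pot S0 S1 t)])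
    (mu : ℝ → 𝒳 → ℝ)
    (hmuSpec : ∀ t : ℝ, t = 0 ∨ t = 1 →
      (fun ω => mu t (X ω)) =ᵐ[P] P[pot Y0 Y1 t|mX X])
    -- the (possibly misspecified) nuisances
    (e0 : 𝒳 → ℝ) (he0 : Measurable e0) (he0Range : ∀ x, e0 x ∈ Set.Icc ε (1 - ε))
    (r0 : ℝ → 𝒳 → 𝒮 → ℝ) (hr0 : Measurable fun p : ℝ × 𝒳 × 𝒮 => r0 p.1 p.2.1 p.2.2)
    (hr0Range : ∀ t x s, r0 t x s ∈ Set.Icc ε 1)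
    (mu0 : ℝ → 𝒳 → ℝ) (hmu0 : Measurable fun p : ℝ × 𝒳 => mu0 p.1 p.2)
    (mt0 : ℝ → 𝒳 → 𝒮 → ℝ) (hmt0 : Measurable fun p : ℝ × 𝒳 × 𝒮 => mt0 p.1 p.2.1 p.2.2)
    -- integrability
    (hint1 : Integrable Y1 P)
    (hint2 : Integrable (fun ω => mt0 1 (X ω) (S1 ω)) P)
    (hint3 : Integrable (fun ω => mu0 1 (X ω)) P) :
    ((∫ ω, mu0 1 (X ω)
          + T ω * R ω / (e0 (X ω) * r0 1 (X ω) (obs T S0 S1 ω))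
            * (obs T Y0 Y1 ω - mt0 1 (X ω) (obs T S0 S1 ω))
          + T ω / e0 (X ω) * (mt0 1 (X ω) (obs T S0 S1 ω) - mu0 1 (X ω)) ∂P)
        - ∫ ω, Y1 ω ∂P
      = (∫ ω, e (X ω) * (r 1 (X ω) (S1 ω) - r0 1 (X ω) (S1 ω))
            / (e0 (X ω) * r0 1 (X ω) (S1 ω))
            * (mt 1 (X ω) (S1 ω) - mt0 1 (X ω) (S1 ω)) ∂P)
        + ∫ ω, (e (X ω) - e0 (X ω)) / e0 (X ω) * (mu 1 (X ω) - mu0 1 (X ω)) ∂P)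
    ∧ ((∀ᵐ ω ∂P,
          (mt0 1 (X ω) (S1 ω) - mt 1 (X ω) (S1 ω))
            * (r0 1 (X ω) (S1 ω) - r 1 (X ω) (S1 ω)) = 0) →
        (∀ᵐ ω ∂P, (mu0 1 (X ω) - mu 1 (X ω)) * (e0 (X ω) - e (X ω)) = 0) →
        (∫ ω, mu0 1 (X ω)
            + T ω * R ω / (e0 (X ω) * r0 1 (X ω) (obs T S0 S1 ω))
              * (obs T Y0 Y1 ω - mt0 1 (X ω) (obs T S0 S1 ω))
            + T ω / e0 (X ω) * (mt0 1 (X ω) (obs T S0 S1 ω) - mu0 1 (X ω)) ∂P)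
          = ∫ ω, Y1 ω ∂P) := by
  have hpotY : pot Y0 Y1 (1 : ℝ) = Y1 := if_pos rfl
  have hpotS : pot S0 S1 (1 : ℝ) = S1 := if_pos rfl
  have hCI := h1i 1 (Or.inr rfl)
  have hfac := h1ii 1 (Or.inr rfl)
  have hmtSpec₁ := hmtSpec 1 (Or.inr rfl)
  have hmuSpec₁ := hmuSpec 1 (Or.inr rfl)
  simp only [hpotY, hpotS] at hCI hfac hmtSpec₁ hmuSpec₁
  have hbias := integral_aipw_sub_integral_eq (Y0 := Y0) hX hT hR hS0 hS1 hY1 hT01 hR01 he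
    heRange heSpec hr hrRange hrSpec hCI hfac hε0 hmt hmtSpec₁ hmuSpec₁ he0 he0Range hr0 hr0Range hmu0 hmt0
    hint1 hint2 hint3
  refine ⟨hbias, fun hmt_or_r hmu_or_e => ?_⟩
  rw [← sub_eq_zero, hbias, integral_eq_zero_of_ae (hmt_or_r.mono fun ω h => by
      rw [Pi.zero_apply]; linear_combination (e (X ω) / (e0 (X ω) * r0 1 (X ω) (S1 ω))) * h),
    integral_eq_zero_of_ae (hmu_or_e.mono fun ω h => by
      rw [Pi.zero_apply]; linear_combination h / e0 (X ω)), add_zero]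

/-- Population double-robustness identity: the bias of the uncentered
influence function with (possibly misspecified) nuisances `(e₀, r₀, μ̃₀, μ₀)` equals the sum of
the two displayed product-bias terms; in particular it vanishes whenever in each pair of
nuisances at least one is correctly specified. -/
theorem statement11
    {Ω 𝒳 𝒮 : Type*} [MeasurableSpace Ω] [MeasurableSpace 𝒳] [MeasurableSpace 𝒮]
    [StandardBorelSpace 𝒳] [StandardBorelSpace 𝒮]
    (P : Measure Ω) [IsProbabilityMeasure P]
    -- the random variables of the model
    (X : Ω → 𝒳) (T R : Ω → ℝ) (S0 S1 : Ω → 𝒮) (Y0 Y1 : Ω → ℝ)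
    (hX : Measurable X) (hT : Measurable T) (hR : Measurable R)
    (hS0 : Measurable S0) (hS1 : Measurable S1)
    (hY0 : Measurable Y0) (hY1 : Measurable Y1)
    (hT01 : ∀ ω, T ω = 0 ∨ T ω = 1) (hR01 : ∀ ω, R ω = 0 ∨ R ω = 1)
    -- the treatment propensity e* (note that E[T|σ(X)] = P(T=1|σ(X)))
    (e : 𝒳 → ℝ) (he : Measurable e) (heRange : ∀ x, e x ∈ Set.Icc (0 : ℝ) 1)
    (heSpec : (fun ω => e (X ω)) =ᵐ[P] P[T|mX X])
    -- the labeling propensity r* (note that E[R|σ(T,X,S)] = P(R=1|σ(T,X,S)))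
    (r : ℝ → 𝒳 → 𝒮 → ℝ) (hr : Measurable fun p : ℝ × 𝒳 × 𝒮 => r p.1 p.2.1 p.2.2)
    (hrRange : ∀ t x s, r t x s ∈ Set.Icc (0 : ℝ) 1)
    (hrSpec : (fun ω => r (T ω) (X ω) (obs T S0 S1 ω)) =ᵐ[P] P[R|m3 T X (obs T S0 S1)])
    -- Assumption 1 (unconfoundedness)
    (h1i : ∀ t : ℝ, t = 0 ∨ t = 1 →
      CondIndepBdd P (mX X) (fun ω => (pot Y0 Y1 t ω, pot S0 S1 t ω)) T)
    (h1ii : ∀ t : ℝ, t = 0 ∨ t = 1 → ∀ g : ℝ → ℝ, Measurable g → Bdd g →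
      ∀ᵐ ω ∂P, T ω = t →
        (P[fun ω' => R ω' * g (pot Y0 Y1 t ω')|m3 X T (pot S0 S1 t)]) ω
          = (P[R|m3 X T (pot S0 S1 t)]) ω
            * (P[fun ω' => g (pot Y0 Y1 t ω')|m3 X T (pot S0 S1 t)]) ω)
    -- Assumption 2 (strict overlap)
    (ε : ℝ) (hε0 : 0 < ε) (hε : ε < 1 / 2)
    (h2e : ∀ᵐ ω ∂P, ε ≤ e (X ω) ∧ e (X ω) ≤ 1 - ε)
    (h2r : ∀ t : ℝ, t = 0 ∨ t = 1 → ∀ᵐ ω ∂P, ε ≤ r t (X ω) (pot S0 S1 t ω))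
    -- the outcome regressions μ̃* and μ*
    (mt : ℝ → 𝒳 → 𝒮 → ℝ) (hmt : Measurable fun p : ℝ × 𝒳 × 𝒮 => mt p.1 p.2.1 p.2.2)
    (hmtSpec : ∀ t : ℝ, t = 0 ∨ t = 1 →
      (fun ω => mt t (X ω) (pot S0 S1 t ω)) =ᵐ[P] P[pot Y0 Y1 t|m2 X (pot S0 S1 t)])
    (mu : ℝ → 𝒳 → ℝ) (hmu : Measurable fun p : ℝ × 𝒳 => mu p.1 p.2)
    (hmuSpec : ∀ t : ℝ, t = 0 ∨ t = 1 →
      (fun ω => mu t (X ω)) =ᵐ[P] P[pot Y0 Y1 t|mX X])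
    -- the (possibly misspecified) nuisances
    (e0 : 𝒳 → ℝ) (he0 : Measurable e0) (he0Range : ∀ x, e0 x ∈ Set.Icc ε (1 - ε))
    (r0 : ℝ → 𝒳 → 𝒮 → ℝ) (hr0 : Measurable fun p : ℝ × 𝒳 × 𝒮 => r0 p.1 p.2.1 p.2.2)
    (hr0Range : ∀ t x s, r0 t x s ∈ Set.Icc ε 1)
    (mu0 : ℝ → 𝒳 → ℝ) (hmu0 : Measurable fun p : ℝ × 𝒳 => mu0 p.1 p.2)
    (mt0 : ℝ → 𝒳 → 𝒮 → ℝ) (hmt0 : Measurable fun p : ℝ × 𝒳 × 𝒮 => mt0 p.1 p.2.1 p.2.2)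
    -- integrability
    (hint1 : Integrable Y1 P)
    (hint2 : Integrable (fun ω => mt0 1 (X ω) (S1 ω)) P)
    (hint3 : Integrable (fun ω => mu0 1 (X ω)) P)
    (hint4 : Integrable (fun ω => mt 1 (X ω) (S1 ω)) P)
    (hint5 : Integrable (fun ω => mu 1 (X ω)) P) :
    ((∫ ω, mu0 1 (X ω)
          + T ω * R ω / (e0 (X ω) * r0 1 (X ω) (obs T S0 S1 ω))
            * (obs T Y0 Y1 ω - mt0 1 (X ω) (obs T S0 S1 ω))
          + T ω / e0 (X ω) * (mt0 1 (X ω) (obs T S0 S1 ω) - mu0 1 (X ω)) ∂P)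
        - ∫ ω, Y1 ω ∂P
      = (∫ ω, e (X ω) * (r 1 (X ω) (S1 ω) - r0 1 (X ω) (S1 ω))
            / (e0 (X ω) * r0 1 (X ω) (S1 ω))
            * (mt 1 (X ω) (S1 ω) - mt0 1 (X ω) (S1 ω)) ∂P)
        + ∫ ω, (e (X ω) - e0 (X ω)) / e0 (X ω) * (mu 1 (X ω) - mu0 1 (X ω)) ∂P)
    ∧ ((∀ᵐ ω ∂P,
          (mt0 1 (X ω) (S1 ω) - mt 1 (X ω) (S1 ω))
            * (r0 1 (X ω) (S1 ω) - r 1 (X ω) (S1 ω)) = 0) →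
        (∀ᵐ ω ∂P, (mu0 1 (X ω) - mu 1 (X ω)) * (e0 (X ω) - e (X ω)) = 0) →
        (∫ ω, mu0 1 (X ω)
            + T ω * R ω / (e0 (X ω) * r0 1 (X ω) (obs T S0 S1 ω))
              * (obs T Y0 Y1 ω - mt0 1 (X ω) (obs T S0 S1 ω))
            + T ω / e0 (X ω) * (mt0 1 (X ω) (obs T S0 S1 ω) - mu0 1 (X ω)) ∂P)
          = ∫ ω, Y1 ω ∂P) :=
  statement11_general P X T R S0 S1 Y0 Y1 hX hT hR hS0 hS1 hY1 hT01 hR01 e he heRange heSpec r hr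
    hrRange hrSpec h1i h1ii ε hε0 mt hmt hmtSpec mu hmuSpec e0 he0 he0Range r0 hr0 hr0Range mu0 hmu0
    mt0 hmt0 hint1 hint2 hint3
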